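/- Let F_{3,2} : ℝ^5 → ℝ^5 be given by F_{3,2}(x,y,u1,u2,u3) = (x³+y²+u1·x+u2·y+u3·x², x·y, u1, u2, u3). Then for every point q = (x,y,u1,u2,u3) ∈ ℝ^5, the derivative of F_{3,2} at q applied to ξ_5(q) = (−(1/3)x³−(1/9)u3·x²+(−(2/9)u1+(2/27)u3²)x, (1/3)x²y+(1/9)u3·xy, −(4/3)u2·xy+(2/9)u1²−(2/27)u1·u3², −(2/9)u3·xy, x³+y²+u1·x+u2·y+u3·x²+(5/9)u1·u3−(4/27)u3³) equals η_5(F_{3,2}(q)), where η_5(X,Y,U1,U2,U3) = ((5/3)Y²+(1/9)U2·U3·Y, (−(2/9)U1+(2/27)U3²)Y, −(4/3)U2·Y+(2/9)U1²−(2/27)U1·U3², −(2/9)U3·Y, X+(5/9)U1·U3−(4/27)U3³). In particular η_5 is liftable over F_{3,2}. -/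

import Mathlib

/-- The stable map `F₃₂` of discrete algebra type `B_{3,2}`. -/
noncomputable def F32 : ℝ × ℝ × ℝ × ℝ × ℝ → ℝ × ℝ × ℝ × ℝ × ℝ :=
  fun (x, y, u1, u2, u3) =>
    (x^3 + y^2 + u1*x + u2*y + u3*x^2, x*y, u1, u2, u3)

/-- The vector field `η₅` on the target of `F₃₂`. -/
noncomputable def eta5 : ℝ × ℝ × ℝ × ℝ × ℝ → ℝ × ℝ × ℝ × ℝ × ℝ :=
  fun (X, Y, U1, U2, U3) =>
    ((5/3)*Y^2 + (1/9)*U2*U3*Y, (-(2/9)*U1 + (2/27)*U3^2)*Y,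
     -(4/3)*U2*Y + (2/9)*U1^2 - (2/27)*U1*U3^2, -(2/9)*U3*Y,
     X + (5/9)*U1*U3 - (4/27)*U3^3)

/-- The lowerable vector field `ξ₅` on the source of `F₃₂`. -/
noncomputable def xi5 : ℝ × ℝ × ℝ × ℝ × ℝ → ℝ × ℝ × ℝ × ℝ × ℝ :=
  fun (x, y, u1, u2, u3) =>
    (-(1/3)*x^3 - (1/9)*u3*x^2 + (-(2/9)*u1 + (2/27)*u3^2)*x,
     (1/3)*x^2*y + (1/9)*u3*x*y,
     -(4/3)*u2*x*y + (2/9)*u1^2 - (2/27)*u1*u3^2,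
     -(2/9)*u3*x*y,
     x^3 + y^2 + u1*x + u2*y + u3*x^2 + (5/9)*u1*u3 - (4/27)*u3^3)

-- The `fderiv` calculus lemmas match on projections, not on the pattern-matching lambda of `F32`.
theorem F32_eq_proj :
    F32 = fun p => (p.1^3 + p.2.1^2 + p.2.2.1*p.1 + p.2.2.2.1*p.2.1 + p.2.2.2.2*p.1^2,
      p.1*p.2.1, p.2.2.1, p.2.2.2.1, p.2.2.2.2) :=
  rfl

theorem fderiv_F32_apply (x y u1 u2 u3 a b c d e : ℝ) :
    fderiv ℝ F32 (x, y, u1, u2, u3) (a, b, c, d, e) =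
      ((3*x^2 + 2*u3*x + u1)*a + (2*y + u2)*b + x*c + y*d + x^2*e, y*a + x*b, c, d, e) := by
  rw [F32_eq_proj]
  simp (disch := fun_prop) only [DifferentiableAt.fderiv_prodMk, fderiv_fun_add, fderiv_fun_mul,
    fderiv_fun_pow, fderiv.fst, fderiv.snd, fderiv_fun_id, ContinuousLinearMap.prod_apply, add_apply,
    smul_apply, ContinuousLinearMap.comp_apply, ContinuousLinearMap.coe_fst',
    ContinuousLinearMap.coe_snd', ContinuousLinearMap.id_apply, smul_eq_mul]
  exact Prod.ext (by ring) (Prod.ext (by ring) rfl)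

/-- `η₅` is liftable over `F₃₂` via `ξ₅`:
for every `q`, `d(F₃₂)_q (ξ₅ q) = η₅ (F₃₂ q)`. -/
theorem eta5_liftable_over_F32 :
    ∀ q : ℝ × ℝ × ℝ × ℝ × ℝ, fderiv ℝ F32 q (xi5 q) = eta5 (F32 q) := by
  rintro ⟨x, y, u1, u2, u3⟩
  simp only [xi5, fderiv_F32_apply, F32, eta5]
  ext <;> ring
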